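/- arXiv:math/0505108 — 3 statements merged into one kernel-verified Lean document; each statement's English description precedes it below -/
import Mathlib

section
/- Let G be a quasi-finite moment graph and M a sheaf on G generated by global sections. Then the following are equivalent: (1) for every open (downwardly closed) subgraph I the restriction M(G) → M(I) is surjective; (2) for every vertex x the restriction M({≤x}) → M({<x}) is surjective; (3) for every vertex x the map M^x → M^{δx} given by the sum of the maps ρ_{x,E} over edges E ending at x is surjective, where M^{δx} is the image of M({<x}) in ⊕_{E ∈ E_{δx}} M^E. -/
open scoped TensorProduct

/-- `(S, ι)` is a symmetric algebra of the `k`-vector space `V`. -/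
structure IsSymmAlg (k V S : Type) [Field k] [AddCommGroup V] [Module k V]
    [CommRing S] [Algebra k S] (ι : V →ₗ[k] S) : Prop where
  univ : ∀ (A : Type) [CommRing A] [Algebra k A] (φ : V →ₗ[k] A),
    ∃! ψ : S →ₐ[k] A, ∀ v, ψ (ι v) = φ v

/-- A moment graph over the `k`-vector space `V`: a graph with a partial order on
vertices such that linked vertices are comparable (each edge is recorded with
`src ≤ tgt`), and a labelling of edges by (generators of) one-dimensional
subspaces of `V`. -/
structure MomentGraph (k V : Type) [Field k] [AddCommGroup V] [Module k V] where
  Vertex : Type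
  Edge : Type
  src : Edge → Vertex
  tgt : Edge → Vertex
  le : Vertex → Vertex → Prop
  le_refl : ∀ x, le x x
  le_trans : ∀ x y z, le x y → le y z → le x z
  le_antisymm : ∀ x y, le x y → le y x → x = y
  src_le_tgt : ∀ e, le (src e) (tgt e)
  src_ne_tgt : ∀ e, src e ≠ tgt e
  label : Edge → V
  label_ne : ∀ e, label e ≠ 0

variable {k V : Type} [Field k] [AddCommGroup V] [Module k V]

/-- The space of sections over a subgraph `I` of the structure sheaf of `G`, with
entries in a commutative ring `A` receiving the labels via `σ : V → A`: tuples
`(z_x)_{x ∈ I}` (encoded as functions vanishing off `I`) with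
`z_x ≡ z_y mod σ(α)` for each edge `x —α— y` of `I`. -/
def secAlg (G : MomentGraph k V) (A : Type) [CommRing A] (σ : V → A)
    (I : Set G.Vertex) : Submodule A (G.Vertex → A) where
  carrier := {z | (∀ x ∉ I, z x = 0) ∧ ∀ e, G.src e ∈ I → G.tgt e ∈ I →
      z (G.src e) - z (G.tgt e) ∈ Ideal.span {σ (G.label e)}}
  add_mem' := by
    intro a b ha hb
    refine ⟨fun x hx => ?_, fun e hs ht => ?_⟩
    · simp [ha.1 x hx, hb.1 x hx]
    · have h : (a + b) (G.src e) - (a + b) (G.tgt e)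
          = (a (G.src e) - a (G.tgt e)) + (b (G.src e) - b (G.tgt e)) := by
        simp only [Pi.add_apply]; ring
      rw [h]
      exact (Ideal.span {σ (G.label e)}).add_mem (ha.2 e hs ht) (hb.2 e hs ht)
  zero_mem' := by
    refine ⟨fun x _ => rfl, fun e _ _ => ?_⟩
    simp
  smul_mem' := by
    intro c a ha
    refine ⟨fun x hx => by simp [ha.1 x hx], fun e hs ht => ?_⟩
    have h : (c • a) (G.src e) - (c • a) (G.tgt e)
        = c * (a (G.src e) - a (G.tgt e)) := by
      simp only [Pi.smul_apply, smul_eq_mul]; ring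
    rw [h]
    exact Ideal.mul_mem_left _ c (ha.2 e hs ht)

/-- The structure algebra `Z(G)` of `G` with coefficients in `S` (via `ι`). -/
def structAlg (G : MomentGraph k V) (S : Type) [CommRing S] (σ : V → S) :
    Submodule S (G.Vertex → S) := secAlg G S σ Set.univ

/-- Restriction of tuples to a subgraph `I` (extension by zero off `I`). -/
noncomputable def restrictTo {A : Type} [CommRing A] {X : Type} (I : Set X) :
    (X → A) →ₗ[A] (X → A) where
  toFun z := I.indicator z
  map_add' a b := by
    funext x
    classical
    by_cases hx : x ∈ I <;> simp [Set.indicator, hx]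
  map_smul' c a := by
    funext x
    classical
    by_cases hx : x ∈ I <;> simp [Set.indicator, hx]

/-- `Z(G)^I`: the image of the restriction map `Z(G) → Z(I)`. -/
noncomputable def structAlgRes (G : MomentGraph k V) (S : Type) [CommRing S]
    (σ : V → S) (I : Set G.Vertex) : Submodule S (G.Vertex → S) :=
  Submodule.map (restrictTo I) (structAlg G S σ)

/-- The structure algebra `Z = Z(G)` as a subalgebra of `∏_{x} S` (pointwise
operations). -/
def structSubalg (G : MomentGraph k V) (S : Type) [CommRing S] (σ : V → S) :
    Subalgebra S (G.Vertex → S) where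
  carrier := {z | ∀ e, z (G.src e) - z (G.tgt e) ∈ Ideal.span {σ (G.label e)}}
  add_mem' := by
    intro a b ha hb e
    have h : (a + b) (G.src e) - (a + b) (G.tgt e)
        = (a (G.src e) - a (G.tgt e)) + (b (G.src e) - b (G.tgt e)) := by
      simp only [Pi.add_apply]; ring
    rw [h]; exact (Ideal.span _).add_mem (ha e) (hb e)
  mul_mem' := by
    intro a b ha hb e
    have h : (a * b) (G.src e) - (a * b) (G.tgt e)
        = a (G.src e) * (b (G.src e) - b (G.tgt e))
          + b (G.tgt e) * (a (G.src e) - a (G.tgt e)) := by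
      simp only [Pi.mul_apply]; ring
    rw [h]
    exact (Ideal.span _).add_mem (Ideal.mul_mem_left _ _ (hb e))
      (Ideal.mul_mem_left _ _ (ha e))
  algebraMap_mem' := by
    intro c e
    simp
  one_mem' := by
    intro e; simp
  zero_mem' := by
    intro e; simp

/-- Quasi-finiteness of a moment graph `G`: for every `γ ∈ V` (with `S·γ`
prime) and every finite subgraph `I`, the natural map
`Z(G)^I ⊗_S S_γ → Z_γ(I)` is a bijection. -/
def QuasiFinite {S : Type} [CommRing S] [Algebra k S] (ι : V →ₗ[k] S)
    (G : MomentGraph k V) : Prop :=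
  ∀ (γ : V), γ ≠ 0 → ∀ (hp : (Ideal.span {ι γ}).IsPrime)
    (I : Set G.Vertex), I.Finite →
    letI := hp
    ∃ f : (structAlgRes G S ι I) ⊗[S] (Localization (Ideal.span {ι γ}).primeCompl)
        →ₗ[S] (G.Vertex → Localization (Ideal.span {ι γ}).primeCompl),
      (∀ (m : structAlgRes G S ι I)
          (s : Localization (Ideal.span {ι γ}).primeCompl),
        f (m ⊗ₜ s) = fun x => s * algebraMap S _ (m.val x))
      ∧ Function.Injective f
      ∧ LinearMap.range f = Submodule.restrictScalars S
          (secAlg G (Localization (Ideal.span {ι γ}).primeCompl)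
            (fun v => algebraMap S _ (ι v)) I)

section CoordFramework

open scoped Classical

/-- Projection of a tuple onto the coordinates in `I` (zero off `I`). -/
noncomputable def projTo {k V : Type} [Field k] [AddCommGroup V] [Module k V]
    {S : Type} [CommRing S] (G : MomentGraph k V) (W : G.Vertex → Type)
    [∀ x, AddCommGroup (W x)] [∀ x, Module S (W x)] (I : Set G.Vertex) :
    (∀ x, W x) →ₗ[S] (∀ x, W x) where
  toFun m x := if x ∈ I then m x else 0
  map_add' a b := by
    funext x
    by_cases hx : x ∈ I <;> simp [hx]
  map_smul' c a := by
    funext x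
    by_cases hx : x ∈ I <;> simp [hx]

/-- `M` (a submodule of `∏_x M_Q^x`) is an object of `Z-mod^f`, coordinatized
via its canonical decomposition: it is stable under the coordinatewise action
of the structure algebra `Z`, finitely generated over `S`, and has finite
support. -/
def IsCoordModF {k V : Type} [Field k] [AddCommGroup V] [Module k V]
    {S : Type} [CommRing S] [Algebra k S] (G : MomentGraph k V)
    (Q : Type) [CommRing Q] [Algebra S Q] (W : G.Vertex → Type)
    [∀ x, AddCommGroup (W x)] [∀ x, Module Q (W x)] [∀ x, Module S (W x)]
    (ι : V →ₗ[k] S) (M : Submodule S (∀ x, W x)) : Prop :=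
  (∀ z : G.Vertex → S, z ∈ structSubalg G S ι → ∀ m ∈ M,
      (fun x => algebraMap S Q (z x) • m x) ∈ M)
  ∧ Module.Finite S M
  ∧ {x : G.Vertex | ∃ m ∈ M, m x ≠ 0}.Finite

/-- `M^J`: the projection of `M` onto the coordinates in `J`. -/
noncomputable def projMod {k V : Type} [Field k] [AddCommGroup V] [Module k V]
    {S : Type} [CommRing S] (G : MomentGraph k V) (W : G.Vertex → Type)
    [∀ x, AddCommGroup (W x)] [∀ x, Module S (W x)]
    (M : Submodule S (∀ x, W x)) (J : Set G.Vertex) :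
    Submodule S (∀ x, W x) :=
  Submodule.map (projTo G W J) M

/-- The stalk `M^x`. -/
noncomputable def stalkMod {k V : Type} [Field k] [AddCommGroup V] [Module k V]
    {S : Type} [CommRing S] (G : MomentGraph k V) (W : G.Vertex → Type)
    [∀ x, AddCommGroup (W x)] [∀ x, Module S (W x)]
    (M : Submodule S (∀ x, W x)) (x : G.Vertex) :
    Submodule S (∀ y, W y) :=
  projMod G W M {x}

/-- `M(E) = Z(E)·M^{x,y}` for an edge `E : x —α— y`. -/
noncomputable def edgeMod {k V : Type} [Field k] [AddCommGroup V] [Module k V]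
    {S : Type} [CommRing S] [Algebra k S] (G : MomentGraph k V)
    (Q : Type) [CommRing Q] [Algebra S Q] (W : G.Vertex → Type)
    [∀ x, AddCommGroup (W x)] [∀ x, Module Q (W x)] [∀ x, Module S (W x)]
    (ι : V →ₗ[k] S) (M : Submodule S (∀ x, W x)) (e : G.Edge) :
    Submodule S (∀ x, W x) :=
  Submodule.span S
    {p | ∃ z : S × S, z.1 - z.2 ∈ Ideal.span {ι (G.label e)} ∧
      ∃ m ∈ projMod G W M {G.src e, G.tgt e},
        p = fun x => algebraMap S Q (if x = G.src e then z.1 else z.2) • m x}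

/-- Sign twist at the vertex `y` (used to form pushouts). -/
noncomputable def twistAt {k V : Type} [Field k] [AddCommGroup V] [Module k V]
    {S : Type} [CommRing S] (G : MomentGraph k V) (W : G.Vertex → Type)
    [∀ x, AddCommGroup (W x)] [∀ x, Module S (W x)] (y : G.Vertex) :
    (∀ x, W x) →ₗ[S] (∀ x, W x) where
  toFun m x := if x = y then -m x else m x
  map_add' a b := by
    funext x
    by_cases hx : x = y <;> simp [hx] <;> abel
  map_smul' c a := by
    funext x
    by_cases hx : x = y <;> simp [hx]

/-- `M^x ⊕ M^y` for an edge `E : x — y` (internal sum of the stalks). -/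
noncomputable def pairMod {k V : Type} [Field k] [AddCommGroup V] [Module k V]
    {S : Type} [CommRing S] (G : MomentGraph k V) (W : G.Vertex → Type)
    [∀ x, AddCommGroup (W x)] [∀ x, Module S (W x)]
    (M : Submodule S (∀ x, W x)) (e : G.Edge) :
    Submodule S (∀ x, W x) :=
  stalkMod G W M (G.src e) ⊔ stalkMod G W M (G.tgt e)

/-- The submodule of `M^x ⊕ M^y` one divides by to obtain the pushout
`L(M)^E` of `M^x ← M(E) → M^y`. -/
noncomputable def pushKer {k V : Type} [Field k] [AddCommGroup V] [Module k V]
    {S : Type} [CommRing S] [Algebra k S] (G : MomentGraph k V)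
    (Q : Type) [CommRing Q] [Algebra S Q] (W : G.Vertex → Type)
    [∀ x, AddCommGroup (W x)] [∀ x, Module Q (W x)] [∀ x, Module S (W x)]
    (ι : V →ₗ[k] S) (M : Submodule S (∀ x, W x)) (e : G.Edge) :
    Submodule S (pairMod G W M e) :=
  Submodule.comap (pairMod G W M e).subtype
    (Submodule.map (twistAt G W (G.tgt e)) (edgeMod G Q W ι M e))

/-- The sections `Γ(L(M))` of the localized sheaf, described by local relations:
tuples `(m_x)` with `m_x ∈ M^x` for all `x` and `(m_x, m_y) ∈ M(E)` for all
edges `E : x — y`. -/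
noncomputable def locSections {k V : Type} [Field k] [AddCommGroup V] [Module k V]
    {S : Type} [CommRing S] [Algebra k S] (G : MomentGraph k V)
    (Q : Type) [CommRing Q] [Algebra S Q] (W : G.Vertex → Type)
    [∀ x, AddCommGroup (W x)] [∀ x, Module Q (W x)] [∀ x, Module S (W x)]
    (ι : V →ₗ[k] S) (M : Submodule S (∀ x, W x)) :
    Set (∀ x, W x) :=
  {m | (∀ x, projTo (S := S) G W {x} m ∈ stalkMod G W M x)
    ∧ ∀ e : G.Edge,
        projTo (S := S) G W {G.src e, G.tgt e} m ∈ edgeMod G Q W ι M e}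

/-- `M` is determined by local relations, i.e. the unit `M → Γ(L(M))` is an
isomorphism. -/
def DetByLocal {k V : Type} [Field k] [AddCommGroup V] [Module k V]
    {S : Type} [CommRing S] [Algebra k S] (G : MomentGraph k V)
    (Q : Type) [CommRing Q] [Algebra S Q] (W : G.Vertex → Type)
    [∀ x, AddCommGroup (W x)] [∀ x, Module Q (W x)] [∀ x, Module S (W x)]
    (ι : V →ₗ[k] S) (M : Submodule S (∀ x, W x)) : Prop :=
  (M : Set (∀ x, W x)) = locSections G Q W ι M

/-- Open (downwardly closed) subgraphs for the Alexandrov topology. -/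
def IsOpenSub {k V : Type} [Field k] [AddCommGroup V] [Module k V]
    (G : MomentGraph k V) (I : Set G.Vertex) : Prop :=
  ∀ x y, G.le x y → y ∈ I → x ∈ I

/-- `M` is flabby: `M^I` is determined by local relations for every open `I`. -/
def Flabby {k V : Type} [Field k] [AddCommGroup V] [Module k V]
    {S : Type} [CommRing S] [Algebra k S] (G : MomentGraph k V)
    (Q : Type) [CommRing Q] [Algebra S Q] (W : G.Vertex → Type)
    [∀ x, AddCommGroup (W x)] [∀ x, Module Q (W x)] [∀ x, Module S (W x)]
    (ι : V →ₗ[k] S) (M : Submodule S (∀ x, W x)) : Prop :=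
  ∀ I : Set G.Vertex, IsOpenSub G I → DetByLocal G Q W ι (projMod G W M I)

/-- Tuples supported at the single vertex `x`. -/
def vertexOnly {k V : Type} [Field k] [AddCommGroup V] [Module k V]
    {S : Type} [CommRing S] (G : MomentGraph k V) (W : G.Vertex → Type)
    [∀ x, AddCommGroup (W x)] [∀ x, Module S (W x)] (x : G.Vertex) :
    Submodule S (∀ y, W y) where
  carrier := {m | ∀ y, y ≠ x → m y = 0}
  add_mem' := by
    intro a b ha hb y hy
    simp [ha y hy, hb y hy]
  zero_mem' := fun y _ => rfl
  smul_mem' := by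
    intro c a ha y hy
    simp [ha y hy]

/-- `M^{[x]} = ker(M^{≤x} → M^{<x})`: elements of `M^{≤x}` supported on `{x}`. -/
noncomputable def grKernel {k V : Type} [Field k] [AddCommGroup V] [Module k V]
    {S : Type} [CommRing S] (G : MomentGraph k V) (W : G.Vertex → Type)
    [∀ x, AddCommGroup (W x)] [∀ x, Module S (W x)]
    (M : Submodule S (∀ x, W x)) (x : G.Vertex) :
    Submodule S (∀ y, W y) :=
  projMod G W M {y | G.le y x} ⊓ vertexOnly G W x

end CoordFramework


/-- A sheaf on the moment graph `G` (labels mapped into `S` via `σ`):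
`S`-modules on vertices and edges, with `σ(l(E))·M^E = 0`, and restriction
maps from the stalks at the endpoints of each edge. -/
structure GSheaf {k V : Type} [Field k] [AddCommGroup V] [Module k V]
    {S : Type} [CommRing S] (G : MomentGraph k V) (σ : V → S) where
  Mv : G.Vertex → ModuleCat S
  Me : G.Edge → ModuleCat S
  ρs : ∀ e, Mv (G.src e) ⟶ Me e
  ρt : ∀ e, Mv (G.tgt e) ⟶ Me e
  killed : ∀ e (u : Me e), σ (G.label e) • u = 0

/-- The space of sections of a sheaf over a subgraph `I` (tuples encoded as
functions vanishing off `I`). -/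
def sheafSec {k V : Type} [Field k] [AddCommGroup V] [Module k V]
    {S : Type} [CommRing S] {G : MomentGraph k V} {σ : V → S}
    (F : GSheaf G σ) (I : Set G.Vertex) : Submodule S (∀ x, F.Mv x) where
  carrier := {m | (∀ x ∉ I, m x = 0) ∧ ∀ e, G.src e ∈ I → G.tgt e ∈ I →
      F.ρs e (m (G.src e)) = F.ρt e (m (G.tgt e))}
  add_mem' := by
    intro a b ha hb
    refine ⟨fun x hx => ?_, fun e hs ht => ?_⟩
    · show a x + b x = 0
      rw [ha.1 x hx, hb.1 x hx, add_zero]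
    · show F.ρs e (a (G.src e) + b (G.src e)) = F.ρt e (a (G.tgt e) + b (G.tgt e))
      rw [map_add, map_add, ha.2 e hs ht, hb.2 e hs ht]
  zero_mem' := ⟨fun x _ => rfl, fun e _ _ => by
    show F.ρs e 0 = F.ρt e 0
    rw [map_zero, map_zero]⟩
  smul_mem' := by
    intro c a ha
    refine ⟨fun x hx => ?_, fun e hs ht => ?_⟩
    · show c • a x = 0
      rw [ha.1 x hx, smul_zero]
    · show F.ρs e (c • a (G.src e)) = F.ρt e (c • a (G.tgt e))
      rw [map_smul, map_smul, ha.2 e hs ht]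

/-- `F` belongs to `SH(G)`: finite support, with finitely generated
torsion-free stalks. -/
def IsSHObj {k V : Type} [Field k] [AddCommGroup V] [Module k V]
    {S : Type} [CommRing S] {G : MomentGraph k V} {σ : V → S}
    (F : GSheaf G σ) : Prop :=
  {x : G.Vertex | ∃ m : F.Mv x, m ≠ 0}.Finite
  ∧ (∀ x, Module.Finite S (F.Mv x))
  ∧ ∀ (x : G.Vertex) (s : S) (m : F.Mv x), s • m = 0 → s = 0 ∨ m = 0

/-- A morphism of sheaves on `G`. -/
structure GSheafHom {k V : Type} [Field k] [AddCommGroup V] [Module k V]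
    {S : Type} [CommRing S] {G : MomentGraph k V} {σ : V → S}
    (F F' : GSheaf G σ) where
  fv : ∀ x, F.Mv x ⟶ F'.Mv x
  fe : ∀ e, F.Me e ⟶ F'.Me e
  comm_s : ∀ e (m : F.Mv (G.src e)),
    fe e (F.ρs e m) = F'.ρs e (fv (G.src e) m)
  comm_t : ∀ e (m : F.Mv (G.tgt e)),
    fe e (F.ρt e m) = F'.ρt e (fv (G.tgt e) m)

/-- `F` is generated by global sections (the counit `L(Γ(F)) → F` is an
isomorphism): every stalk element is the component of a global section, the
edge modules are generated by the images of the stalks, and every local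
relation comes from a global section. -/
def IsGenByGlobal {k V : Type} [Field k] [AddCommGroup V] [Module k V]
    {S : Type} [CommRing S] {G : MomentGraph k V} {σ : V → S}
    (F : GSheaf G σ) : Prop :=
  (∀ (x : G.Vertex) (m : F.Mv x), ∃ s ∈ sheafSec F Set.univ, s x = m)
  ∧ (∀ (e : G.Edge) (u : F.Me e), ∃ a b, F.ρs e a + F.ρt e b = u)
  ∧ ∀ (e : G.Edge) (a : F.Mv (G.src e)) (b : F.Mv (G.tgt e)),
      F.ρs e a = F.ρt e b →
      ∃ s ∈ sheafSec F Set.univ, s (G.src e) = a ∧ s (G.tgt e) = b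

/-- `F` is flabby for the Alexandrov topology: sections over open subgraphs
extend to global sections. -/
def IsFlabbySheaf {k V : Type} [Field k] [AddCommGroup V] [Module k V]
    {S : Type} [CommRing S] {G : MomentGraph k V} {σ : V → S}
    (F : GSheaf G σ) : Prop :=
  ∀ I : Set G.Vertex, IsOpenSub G I →
    ∀ s ∈ sheafSec F I, ∃ t ∈ sheafSec F Set.univ, ∀ x ∈ I, t x = s x

/-- `F` has reflexive spaces of sections over all open subgraphs. -/
def IsRefSheaf {k V : Type} [Field k] [AddCommGroup V] [Module k V]
    {S : Type} [CommRing S] {G : MomentGraph k V} {σ : V → S}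
    (F : GSheaf G σ) : Prop :=
  ∀ I : Set G.Vertex, IsOpenSub G I →
    Function.Bijective (Module.Dual.eval S (sheafSec F I))

/-- Objects of the exact category `C^{ref}`: sheaves in `SH(G)` generated by
global sections, flabby, with reflexive sections. -/
def IsCref {k V : Type} [Field k] [AddCommGroup V] [Module k V]
    {S : Type} [CommRing S] {G : MomentGraph k V} {σ : V → S}
    (F : GSheaf G σ) : Prop :=
  IsSHObj F ∧ IsGenByGlobal F ∧ IsFlabbySheaf F ∧ IsRefSheaf F

/-- The sequence `A → B → C` of sheaves is short exact: the induced sequence of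
sections over every open subgraph is short exact. -/
def SheafSES {k V : Type} [Field k] [AddCommGroup V] [Module k V]
    {S : Type} [CommRing S] {G : MomentGraph k V} {σ : V → S}
    {A B C : GSheaf G σ} (f : GSheafHom A B) (g : GSheafHom B C) : Prop :=
  ∀ I : Set G.Vertex, IsOpenSub G I →
    (∀ s ∈ sheafSec A I, (fun x => f.fv x (s x)) = (0 : ∀ x, B.Mv x) → s = 0)
    ∧ (∀ s ∈ sheafSec A I,
        (fun x => g.fv x (f.fv x (s x))) = (0 : ∀ x, C.Mv x))
    ∧ (∀ t ∈ sheafSec B I, (fun x => g.fv x (t x)) = (0 : ∀ x, C.Mv x) →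
        ∃ s ∈ sheafSec A I, (fun x => f.fv x (s x)) = t)
    ∧ (∀ u ∈ sheafSec C I,
        ∃ t ∈ sheafSec B I, (fun x => g.fv x (t x)) = u)

/-- `P` is a projective object of the exact category `C^{ref}`: morphisms to
the target of an admissible epimorphism in `C^{ref}` lift. -/
def IsProjCref {k V : Type} [Field k] [AddCommGroup V] [Module k V]
    {S : Type} [CommRing S] {G : MomentGraph k V} {σ : V → S}
    (P : GSheaf G σ) : Prop :=
  ∀ (B C : GSheaf G σ), IsCref B → IsCref C → ∀ g : GSheafHom B C,
    (∃ A : GSheaf G σ, IsCref A ∧ ∃ f : GSheafHom A B, SheafSES f g) →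
    ∀ h : GSheafHom P C, ∃ l : GSheafHom P B,
      (∀ x m, g.fv x (l.fv x m) = h.fv x m)
      ∧ ∀ e u, g.fe e (l.fe e u) = h.fe e u

/-- A morphism of sheaves is an isomorphism. -/
def IsIsoHom {k V : Type} [Field k] [AddCommGroup V] [Module k V]
    {S : Type} [CommRing S] {G : MomentGraph k V} {σ : V → S}
    {A B : GSheaf G σ} (f : GSheafHom A B) : Prop :=
  (∀ x, Function.Bijective (f.fv x)) ∧ ∀ e, Function.Bijective (f.fe e)

/-- A sheaf is indecomposable: it is nonzero and every idempotent endomorphism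
is the identity or zero. -/
def IsIndecSheaf {k V : Type} [Field k] [AddCommGroup V] [Module k V]
    {S : Type} [CommRing S] {G : MomentGraph k V} {σ : V → S}
    (P : GSheaf G σ) : Prop :=
  (∃ (x : G.Vertex) (m : P.Mv x), m ≠ 0)
  ∧ ∀ f : GSheafHom P P, (∀ x m, f.fv x (f.fv x m) = f.fv x m) →
      (∀ e u, f.fe e (f.fe e u) = f.fe e u) →
      ((∀ x m, f.fv x m = m) ∧ ∀ e u, f.fe e u = u)
      ∨ ((∀ x (m : P.Mv x), f.fv x m = 0) ∧ ∀ e (u : P.Me e), f.fe e u = 0)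

/-!
(1) ⇒ (2) restricts a global section to `{≤ x}`, and (2) ⇔ (3) holds because a section
over `{≤ x}` is a section over `{< x}` together with a value at `x` compatible along the edges
ending at `x`. For (2) ⇒ (1), extend a section over an open `I` to `I ∪ {≤ x}` for a minimal
vertex `x` of the support outside `I`. Since the sheaf is generated by global sections, the
restriction maps out of a stalk vanish along edges towards a zero stalk, so vertices outside the
support impose no conditions. As the support is finite, finitely many such steps cover it, and
the section then extends by zero.
-/

namespace MomentGraph

/-- `<` is chosen so that `Set.Iio x` is definitionally `{y | G.le y x ∧ y ≠ x}`. -/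
instance (G : MomentGraph k V) : PartialOrder G.Vertex where
  le := G.le
  lt x y := G.le x y ∧ x ≠ y
  le_refl := G.le_refl
  le_trans := G.le_trans
  le_antisymm := G.le_antisymm
  lt_iff_le_not_ge x y :=
    ⟨fun h => ⟨h.1, fun h' => h.2 (G.le_antisymm x y h.1 h')⟩,
      fun h => ⟨h.1, fun hxy => h.2 (hxy ▸ G.le_refl x)⟩⟩

theorem isOpenSub_iff_isLowerSet {G : MomentGraph k V} {I : Set G.Vertex} :
    IsOpenSub G I ↔ IsLowerSet I :=
  ⟨fun h _ _ hba ha => h _ _ hba ha, fun h _ _ hxy hy => h hxy hy⟩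

end MomentGraph

namespace GSheaf

variable {S : Type} [CommRing S] {G : MomentGraph k V} {σ : V → S} (F : GSheaf G σ)

def support : Set G.Vertex := {x | ∃ m : F.Mv x, m ≠ 0}

variable {F}

theorem eq_zero_of_notMem_support {x : G.Vertex} (hx : x ∉ F.support) (m : F.Mv x) : m = 0 :=
  not_not.1 fun hm => hx ⟨m, hm⟩

theorem ρs_eq_zero_of_tgt_notMem_support (hgen : IsGenByGlobal F) {e : G.Edge}
    (he : G.tgt e ∉ F.support) (a : F.Mv (G.src e)) : F.ρs e a = 0 := by
  obtain ⟨t, ht, rfl⟩ := hgen.1 (G.src e) a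
  rw [ht.2 e trivial trivial, eq_zero_of_notMem_support he (t (G.tgt e)), map_zero]

theorem ρt_eq_zero_of_src_notMem_support (hgen : IsGenByGlobal F) {e : G.Edge}
    (he : G.src e ∉ F.support) (b : F.Mv (G.tgt e)) : F.ρt e b = 0 := by
  obtain ⟨t, ht, rfl⟩ := hgen.1 (G.tgt e) b
  rw [← ht.2 e trivial trivial, eq_zero_of_notMem_support he (t (G.src e)), map_zero]

theorem ρs_eq_ρt_of_notMem_support (hgen : IsGenByGlobal F) {e : G.Edge}
    (he : G.src e ∉ F.support ∨ G.tgt e ∉ F.support)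
    (a : F.Mv (G.src e)) (b : F.Mv (G.tgt e)) : F.ρs e a = F.ρt e b := by
  rcases he with he | he
  · rw [eq_zero_of_notMem_support he a, map_zero, ρt_eq_zero_of_src_notMem_support hgen he]
  · rw [eq_zero_of_notMem_support he b, map_zero, ρs_eq_zero_of_tgt_notMem_support hgen he]

theorem sheafSec_le_of_inter_support_subset (hgen : IsGenByGlobal F) {J K : Set G.Vertex}
    (hJK : J ⊆ K) (hsupp : K ∩ F.support ⊆ J) : sheafSec F J ≤ sheafSec F K := by
  intro s ⟨hs₀, hs⟩
  refine ⟨fun x hx => hs₀ x fun hxJ => hx (hJK hxJ), fun e hsK htK => ?_⟩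
  by_cases hsJ : G.src e ∈ J
  · by_cases htJ : G.tgt e ∈ J
    · exact hs e hsJ htJ
    · exact ρs_eq_ρt_of_notMem_support hgen (.inr fun ht => htJ (hsupp ⟨htK, ht⟩)) _ _
  · exact ρs_eq_ρt_of_notMem_support hgen (.inl fun hs => hsJ (hsupp ⟨hsK, hs⟩)) _ _

theorem piecewise_mem_sheafSec {I J : Set G.Vertex} [DecidablePred (· ∈ J)]
    {s : ∀ x, F.Mv x} (hs : s ∈ sheafSec F I) (hJI : J ⊆ I) :
    J.piecewise s 0 ∈ sheafSec F J := by
  refine ⟨fun x hx => J.piecewise_eq_of_notMem _ _ hx, fun e hsJ htJ => ?_⟩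
  rw [J.piecewise_eq_of_mem _ _ hsJ, J.piecewise_eq_of_mem _ _ htJ]
  exact hs.2 e (hJI hsJ) (hJI htJ)

/-- Sections over two open subgraphs that agree on the overlap glue: no edge joins `I \ J` to
`J \ I`, as its lower endpoint would lie in both. -/
theorem piecewise_mem_sheafSec_union {I J : Set G.Vertex} [DecidablePred (· ∈ I)]
    (hI : IsLowerSet I) (hJ : IsLowerSet J) {s t : ∀ x, F.Mv x}
    (hs : s ∈ sheafSec F I) (ht : t ∈ sheafSec F J) (hst : ∀ x ∈ I ∩ J, s x = t x) :
    I.piecewise s t ∈ sheafSec F (I ∪ J) := by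
  refine ⟨fun x hx => ?_, fun e hsIJ htIJ => ?_⟩
  · rw [I.piecewise_eq_of_notMem _ _ fun h => hx (.inl h)]
    exact ht.1 x fun h => hx (.inr h)
  · have hle : G.src e ≤ G.tgt e := G.src_le_tgt e
    by_cases htI : G.tgt e ∈ I
    · have hsI : G.src e ∈ I := hI hle htI
      rw [I.piecewise_eq_of_mem _ _ hsI, I.piecewise_eq_of_mem _ _ htI]
      exact hs.2 e hsI htI
    · have htJ : G.tgt e ∈ J := htIJ.resolve_left htI
      have hsJ : G.src e ∈ J := hJ hle htJ
      have hsrc : I.piecewise s t (G.src e) = t (G.src e) := by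
        by_cases hsI : G.src e ∈ I
        · rw [I.piecewise_eq_of_mem _ _ hsI, hst _ ⟨hsI, hsJ⟩]
        · exact I.piecewise_eq_of_notMem _ _ hsI
      rw [hsrc, I.piecewise_eq_of_notMem _ _ htI]
      exact ht.2 e hsJ htJ

theorem exists_Iic_extension_iff {x : G.Vertex} {s : ∀ y, F.Mv y}
    (hs : s ∈ sheafSec F (Set.Iio x)) :
    (∃ t ∈ sheafSec F (Set.Iic x), ∀ y ≤ x, y ≠ x → t y = s y) ↔
      ∃ m : F.Mv x, ∀ (e : G.Edge) (h : G.tgt e = x),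
        F.ρt e (h.symm ▸ m) = F.ρs e (s (G.src e)) := by
  classical
  constructor
  · rintro ⟨t, ht, hts⟩
    refine ⟨t x, fun e h => ?_⟩
    subst h
    rw [← hts _ (G.src_le_tgt e) (G.src_ne_tgt e)]
    exact (ht.2 e (G.src_le_tgt e) Set.self_mem_Iic).symm
  · rintro ⟨m, hm⟩
    refine ⟨Function.update s x m, ⟨fun y hy => ?_, fun e hsx htx => ?_⟩,
      fun y _ hyx => Function.update_of_ne hyx _ _⟩
    · rw [Function.update_of_ne (by rintro rfl; exact hy Set.self_mem_Iic)]
      exact hs.1 y fun h => hy (Set.Iio_subset_Iic_self h)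
    · have hsrc : G.src e ≠ x := by
        rintro rfl
        exact G.src_ne_tgt e (le_antisymm (G.src_le_tgt e) htx)
      rw [Function.update_of_ne hsrc]
      by_cases htgt : G.tgt e = x
      · subst htgt
        rw [Function.update_self]
        exact (hm e rfl).symm
      · rw [Function.update_of_ne htgt]
        exact hs.2 e (lt_of_le_of_ne hsx hsrc) (lt_of_le_of_ne htx htgt)

section Extension

variable (hgen : IsGenByGlobal F)
  (hvert : ∀ x : G.Vertex, ∀ s ∈ sheafSec F (Set.Iio x),
    ∃ t ∈ sheafSec F (Set.Iic x), ∀ y ≤ x, y ≠ x → t y = s y)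
include hgen hvert

theorem exists_extension_union_Iic {I : Set G.Vertex} (hI : IsLowerSet I) {x : G.Vertex}
    (hxI : x ∉ I) (hx : Set.Iio x ∩ F.support ⊆ I) {s : ∀ y, F.Mv y}
    (hs : s ∈ sheafSec F I) :
    ∃ t ∈ sheafSec F (I ∪ Set.Iic x), ∀ y ∈ I, t y = s y := by
  classical
  have hs₀ : (Set.Iio x ∩ I).piecewise s 0 ∈ sheafSec F (Set.Iio x) :=
    sheafSec_le_of_inter_support_subset hgen Set.inter_subset_left
      (fun y hy => ⟨hy.1, hx hy⟩) (piecewise_mem_sheafSec hs Set.inter_subset_right)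
  obtain ⟨t, ht, hts⟩ := hvert x _ hs₀
  have hagree : ∀ y ∈ I ∩ Set.Iic x, s y = t y := fun y ⟨hyI, hyx⟩ => by
    have hne : y ≠ x := fun h => hxI (h ▸ hyI)
    rw [hts y hyx hne, Set.piecewise_eq_of_mem _ _ _ (show y ∈ Set.Iio x ∩ I from
      ⟨lt_of_le_of_ne hyx hne, hyI⟩)]
  exact ⟨I.piecewise s t, piecewise_mem_sheafSec_union hI (isLowerSet_Iic x) hs ht hagree,
    fun y hy => I.piecewise_eq_of_mem _ _ hy⟩

theorem exists_global_extension (hfin : F.support.Finite) {I : Set G.Vertex} (hI : IsLowerSet I)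
    {s : ∀ y, F.Mv y} (hs : s ∈ sheafSec F I) :
    ∃ t ∈ sheafSec F Set.univ, ∀ y ∈ I, t y = s y := by
  induction hn : (F.support \ I).ncard using Nat.strong_induction_on generalizing I s with
  | _ n ih =>
    by_cases hsupp : F.support ⊆ I
    · exact ⟨s, sheafSec_le_of_inter_support_subset hgen (Set.subset_univ I)
        (fun y hy => hsupp hy.2) hs, fun _ _ => rfl⟩
    obtain ⟨x, ⟨hxsupp, hxI⟩, hxmin⟩ :=
      (hfin.sdiff (t := I)).exists_minimal (Set.sdiff_nonempty.2 hsupp)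
    have hx : Set.Iio x ∩ F.support ⊆ I := fun y ⟨hyx, hy⟩ =>
      not_not.1 fun hyI => hyx.not_ge (hxmin ⟨hy, hyI⟩ hyx.le)
    obtain ⟨t, ht, hts⟩ := exists_extension_union_Iic hgen hvert hI hxI hx hs
    have hlt : (F.support \ (I ∪ Set.Iic x)).ncard < n := hn ▸ Set.ncard_lt_ncard
      (Set.ssubset_iff_of_subset (Set.sdiff_subset_sdiff_right Set.subset_union_left) |>.2
        ⟨x, ⟨hxsupp, hxI⟩, fun h => h.2 (.inr Set.self_mem_Iic)⟩) hfin.sdiff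
    obtain ⟨u, hu, hut⟩ := ih _ hlt (hI.union (isLowerSet_Iic x)) ht rfl
    exact ⟨u, hu, fun y hy => (hut y (.inl hy)).trans (hts y hy)⟩

end Extension

end GSheaf

theorem flabby_tfae_general
    {k V S : Type} [Field k] [AddCommGroup V] [Module k V]
    [CommRing S] [Algebra k S] (ι : V →ₗ[k] S)
    (G : MomentGraph k V)
    (F : GSheaf G (fun v => ι v)) (hSH : IsSHObj F)
    (hgen : IsGenByGlobal F) :
    ((∀ I : Set G.Vertex, IsOpenSub G I →
        ∀ s ∈ sheafSec F I, ∃ t ∈ sheafSec F Set.univ, ∀ x ∈ I, t x = s x)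
      ↔ (∀ x : G.Vertex,
          ∀ s ∈ sheafSec F {y | G.le y x ∧ y ≠ x},
            ∃ t ∈ sheafSec F {y | G.le y x},
              ∀ y, G.le y x → y ≠ x → t y = s y))
    ∧ ((∀ x : G.Vertex,
          ∀ s ∈ sheafSec F {y | G.le y x ∧ y ≠ x},
            ∃ t ∈ sheafSec F {y | G.le y x},
              ∀ y, G.le y x → y ≠ x → t y = s y)
      ↔ (∀ x : G.Vertex,
          ∀ s ∈ sheafSec F {y | G.le y x ∧ y ≠ x},
            ∃ m : F.Mv x, ∀ (e : G.Edge) (h : G.tgt e = x),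
              F.ρt e (h.symm ▸ m) = F.ρs e (s (G.src e)))) := by
  refine ⟨⟨fun hflabby x s hs => ?_, fun hvert I hI s hs => ?_⟩,
    forall_congr' fun x => forall₂_congr fun s hs => GSheaf.exists_Iic_extension_iff hs⟩
  · classical
    obtain ⟨t, ht, hts⟩ :=
      hflabby _ (MomentGraph.isOpenSub_iff_isLowerSet.2 (isLowerSet_Iio x)) s hs
    exact ⟨(Set.Iic x).piecewise t 0, GSheaf.piecewise_mem_sheafSec ht (Set.subset_univ _),
      fun y hyx hne => ((Set.Iic x).piecewise_eq_of_mem t 0 hyx).trans (hts y ⟨hyx, hne⟩)⟩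
  · exact GSheaf.exists_global_extension hgen hvert hSH.1
      (MomentGraph.isOpenSub_iff_isLowerSet.1 hI) hs

/-- Let `G` be a quasi-finite moment graph and `F` a sheaf on `G`
generated by global sections.  Then the following are equivalent:
(1) for every open subgraph `I` the restriction `F(G) → F(I)` is surjective;
(2) for every vertex `x` the restriction `F({≤x}) → F({<x})` is surjective;
(3) for every vertex `x` the map `F^x → F^{δx}` (the sum of the maps `ρ_{x,E}`
over edges ending at `x`) is surjective onto the image `F^{δx}` of `F({<x})`. -/
theorem flabby_tfae
    {k V S : Type} [Field k] [AddCommGroup V] [Module k V]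
    [CommRing S] [IsDomain S] [Algebra k S] (ι : V →ₗ[k] S)
    (hS : IsSymmAlg k V S ι)
    (G : MomentGraph k V) (hqf : QuasiFinite ι G)
    (F : GSheaf G (fun v => ι v)) (hSH : IsSHObj F)
    (hgen : IsGenByGlobal F) :
    ((∀ I : Set G.Vertex, IsOpenSub G I →
        ∀ s ∈ sheafSec F I, ∃ t ∈ sheafSec F Set.univ, ∀ x ∈ I, t x = s x)
      ↔ (∀ x : G.Vertex,
          ∀ s ∈ sheafSec F {y | G.le y x ∧ y ≠ x},
            ∃ t ∈ sheafSec F {y | G.le y x},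
              ∀ y, G.le y x → y ≠ x → t y = s y))
    ∧ ((∀ x : G.Vertex,
          ∀ s ∈ sheafSec F {y | G.le y x ∧ y ≠ x},
            ∃ t ∈ sheafSec F {y | G.le y x},
              ∀ y, G.le y x → y ≠ x → t y = s y)
      ↔ (∀ x : G.Vertex,
          ∀ s ∈ sheafSec F {y | G.le y x ∧ y ≠ x},
            ∃ m : F.Mv x, ∀ (e : G.Edge) (h : G.tgt e = x),
              F.ρt e (h.symm ▸ m) = F.ρs e (s (G.src e)))) :=
  flabby_tfae_general ι G F hSH hgen
end

section
/- Let G be a quasi-finite moment graph, M a flabby object of Z-mod, and I an open subgraph with x ∈ I a maximal vertex. Then there is a canonical short exact sequence 0 → M^{[x]} → M^I → M^{I∖{x}} → 0, where M^{[x]} = ker(M^{≤x} → M^{<x}). Consequently, for any enumeration of supp(M) refining the reverse of the partial order, M admits a finite filtration by Z-submodules with successive subquotients isomorphic to the modules M^{[v]} for v ∈ supp(M). -/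
open scoped TensorProduct

variable {k V : Type} [Field k] [AddCommGroup V] [Module k V]

section Helpers

open scoped Classical

variable {k V : Type} [Field k] [AddCommGroup V] [Module k V]
variable {S : Type} [CommRing S]

lemma projTo_apply (G : MomentGraph k V) (W : G.Vertex → Type)
    [∀ x, AddCommGroup (W x)] [∀ x, Module S (W x)] (I : Set G.Vertex)
    (m : ∀ x, W x) (v : G.Vertex) :
    projTo (S := S) G W I m v = if v ∈ I then m v else 0 := rfl

lemma projTo_eq_zero_iff (G : MomentGraph k V) (W : G.Vertex → Type)
    [∀ x, AddCommGroup (W x)] [∀ x, Module S (W x)] (I : Set G.Vertex)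
    (m : ∀ x, W x) :
    projTo (S := S) G W I m = 0 ↔ ∀ v ∈ I, m v = 0 := by
  constructor
  · intro h v hv
    have h2 := congrFun h v
    simpa [projTo_apply, hv] using h2
  · intro h
    funext v
    by_cases hv : v ∈ I
    · simp [projTo_apply, hv, h v hv]
    · simp [projTo_apply, hv]

lemma mem_vertexOnly_iff (G : MomentGraph k V) (W : G.Vertex → Type)
    [∀ x, AddCommGroup (W x)] [∀ x, Module S (W x)] (x : G.Vertex)
    (m : ∀ y, W y) :
    m ∈ vertexOnly (S := S) G W x ↔ ∀ y, y ≠ x → m y = 0 := Iff.rfl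

lemma mem_projMod_iff (G : MomentGraph k V) (W : G.Vertex → Type)
    [∀ x, AddCommGroup (W x)] [∀ x, Module S (W x)]
    (M : Submodule S (∀ x, W x)) (J : Set G.Vertex) (m : ∀ x, W x) :
    m ∈ projMod G W M J ↔ ∃ m₀ ∈ M, projTo (S := S) G W J m₀ = m :=
  Submodule.mem_map

end Helpers



/-- Let `G` be a quasi-finite moment graph, `M` a flabby object of
`Z-mod`, and `I` an open subgraph with `x ∈ I` maximal.  Then there is a
canonical short exact sequence `0 → M^{[x]} → M^I → M^{I∖{x}} → 0`, where
`M^{[x]} = ker(M^{≤x} → M^{<x})`.  Consequently, for any enumeration of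
`supp(M)` refining the reverse of the partial order, `M` admits a finite
filtration by `Z`-submodules with successive subquotients isomorphic to the
modules `M^{[v]}`, `v ∈ supp(M)`. -/
theorem order_filtration
    {k V S : Type} [Field k] [AddCommGroup V] [Module k V]
    [CommRing S] [IsDomain S] [Algebra k S] (ι : V →ₗ[k] S)
    (hS : IsSymmAlg k V S ι)
    (G : MomentGraph k V) (hqf : QuasiFinite ι G)
    (Q : Type) [Field Q] [Algebra S Q] [IsFractionRing S Q]
    (W : G.Vertex → Type) [∀ x, AddCommGroup (W x)] [∀ x, Module Q (W x)]
    [∀ x, Module S (W x)] [∀ x, IsScalarTower S Q (W x)]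
    (M : Submodule S (∀ x, W x)) (hM : IsCoordModF G Q W ι M)
    (hfl : Flabby G Q W ι M) :
    (∀ (I : Set G.Vertex), IsOpenSub G I →
      ∀ x ∈ I, (∀ y ∈ I, G.le x y → y = x) →
        (projMod G W M I ⊓ LinearMap.ker (projTo (S := S) G W (I \ {x}))
            = grKernel G W M x)
        ∧ Submodule.map (projTo (S := S) G W (I \ {x})) (projMod G W M I)
            = projMod G W M (I \ {x}))
    ∧ ∀ (n : ℕ) (en : Fin n ≃ {v : G.Vertex // ∃ m ∈ M, m v ≠ 0}),
        (∀ i j : Fin n,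
          G.le (en j).1 (en i).1 → (en j).1 ≠ (en i).1 → i < j) →
        ∃ N : Fin (n + 1) → Submodule S (∀ x, W x),
          N 0 = ⊥ ∧ N (Fin.last n) = M ∧ Monotone N ∧
          (∀ i : Fin (n + 1), ∀ z : G.Vertex → S, z ∈ structSubalg G S ι →
            ∀ m ∈ N i, (fun x => algebraMap S Q (z x) • m x) ∈ N i) ∧
          ∀ i : Fin n,
            ∃ φ : ((N i.succ) ⧸
                Submodule.comap (N i.succ).subtype (N i.castSucc))
              ≃ₗ[S] (grKernel G W M (en i).1),
              ∀ (z : G.Vertex → S), z ∈ structSubalg G S ι →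
                ∀ (m : N i.succ)
                  (hm' : (fun x => algebraMap S Q (z x) • m.1 x) ∈ N i.succ),
                (φ (Submodule.Quotient.mk ⟨_, hm'⟩)).1
                  = fun x => algebraMap S Q (z x)
                      • (φ (Submodule.Quotient.mk m)).1 x := by
    classical
  obtain ⟨hZstab, hfin, hsuppfin⟩ := hM
  have hpart1 : ∀ (I : Set G.Vertex), IsOpenSub G I →
      ∀ x ∈ I, (∀ y ∈ I, G.le x y → y = x) →
        (projMod G W M I ⊓ LinearMap.ker (projTo (S := S) G W (I \ {x}))
            = grKernel G W M x)
        ∧ Submodule.map (projTo (S := S) G W (I \ {x})) (projMod G W M I)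
            = projMod G W M (I \ {x}) := by
    intro I hI x hxI hxmax
    constructor
    · apply le_antisymm
      · rintro m hm
        rw [Submodule.mem_inf] at hm
        obtain ⟨hm1, hm2⟩ := hm
        rw [mem_projMod_iff] at hm1
        obtain ⟨m₀, hm₀, rfl⟩ := hm1
        rw [LinearMap.mem_ker, projTo_eq_zero_iff] at hm2
        have hvan : ∀ v, v ∈ I → v ≠ x → m₀ v = 0 := by
          intro v hvI hvx
          have h2 := hm2 v ⟨hvI, by simpa using hvx⟩
          simpa [projTo_apply, hvI] using h2
        rw [grKernel, Submodule.mem_inf]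
        constructor
        · rw [mem_projMod_iff]
          refine ⟨m₀, hm₀, ?_⟩
          funext v
          by_cases h1 : G.le v x
          · have hvI : v ∈ I := hI v x h1 hxI
            simp [projTo_apply, hvI, Set.mem_setOf_eq, h1]
          · by_cases hvI : v ∈ I
            · have hvx : v ≠ x := by rintro rfl; exact h1 (G.le_refl v)
              simp [projTo_apply, hvI, Set.mem_setOf_eq, h1, hvan v hvI hvx]
            · simp [projTo_apply, hvI, Set.mem_setOf_eq, h1]
        · rw [mem_vertexOnly_iff]
          intro v hvx
          by_cases hvI : v ∈ I
          · simp [projTo_apply, hvI, hvan v hvI hvx]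
          · simp [projTo_apply, hvI]
      · rintro g hg
        rw [grKernel, Submodule.mem_inf] at hg
        obtain ⟨hg1, hgv⟩ := hg
        rw [mem_vertexOnly_iff] at hgv
        rw [mem_projMod_iff] at hg1
        obtain ⟨m₀, hm₀, hg1⟩ := hg1
        have hgx : g x = m₀ x := by
          rw [← hg1]; simp [projTo_apply, Set.mem_setOf_eq, G.le_refl x]
        have hm₀lt : ∀ v, G.le v x → v ≠ x → m₀ v = 0 := by
          intro v h1 h2
          have h3 := hgv v h2
          rw [← hg1] at h3
          simpa [projTo_apply, Set.mem_setOf_eq, h1] using h3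
        rw [Submodule.mem_inf]
        constructor
        · have hdet : (↑(projMod G W M I) : Set (∀ x, W x))
              = locSections G Q W ι (projMod G W M I) := hfl I hI
          have hloc : g ∈ locSections G Q W ι (projMod G W M I) := by
            refine ⟨?_, ?_⟩
            · intro y
              by_cases hy : y = x
              · subst hy
                have hEq : projTo (S := S) G W ({y} : Set G.Vertex) g
                    = projTo (S := S) G W {y}
                      (projTo (S := S) G W I m₀) := by
                  funext v
                  by_cases hv : v ∈ ({y} : Set G.Vertex)
                  · rw [Set.mem_singleton_iff] at hv; subst hv
                    simp [projTo_apply, Set.mem_singleton_iff, hxI, hgx]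
                  · simp [projTo_apply, hv]
                rw [hEq]
                exact Submodule.mem_map_of_mem (Submodule.mem_map_of_mem hm₀)
              · have hEq : projTo (S := S) G W ({y} : Set G.Vertex) g = 0 := by
                  funext v
                  by_cases hv : v ∈ ({y} : Set G.Vertex)
                  · rw [Set.mem_singleton_iff] at hv; subst hv
                    simp [projTo_apply, Set.mem_singleton_iff, hgv v hy]
                  · simp [projTo_apply, hv]
                rw [hEq]
                exact Submodule.zero_mem _
            · intro e
              by_cases hxe : x = G.src e ∨ x = G.tgt e
              · have hEq : projTo (S := S) G W {G.src e, G.tgt e} g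
                    = projTo (S := S) G W {G.src e, G.tgt e}
                      (projTo (S := S) G W I m₀) := by
                  funext v
                  by_cases hv : v ∈ ({G.src e, G.tgt e} : Set G.Vertex)
                  · by_cases hvx : v = x
                    · subst hvx
                      simp [projTo_apply, hv, hxI, hgx]
                    · have hgv0 : g v = 0 := hgv v hvx
                      have hv' : v = G.src e ∨ v = G.tgt e := by
                        rwa [Set.mem_insert_iff, Set.mem_singleton_iff] at hv
                      have hRHS : (if v ∈ I then m₀ v else 0) = 0 := by
                        by_cases hvI : v ∈ I
                        · rcases hxe with hxs | hxt
                          · exfalso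
                            have hvt : v = G.tgt e := by
                              rcases hv' with h | h
                              · exact absurd (h.trans hxs.symm) hvx
                              · exact h
                            exact hvx (hxmax v hvI
                              (by rw [hxs, hvt]; exact G.src_le_tgt e))
                          · have hvs : v = G.src e := by
                              rcases hv' with h | h
                              · exact h
                              · exact absurd (h.trans hxt.symm) hvx
                            rw [if_pos hvI]
                            exact hm₀lt v
                              (by rw [hvs, hxt]; exact G.src_le_tgt e) hvx
                        · rw [if_neg hvI]
                      simp only [projTo_apply]
                      rw [if_pos hv, if_pos hv, hgv0, hRHS]
                  · simp [projTo_apply, hv]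
                rw [hEq]
                apply Submodule.subset_span
                refine ⟨((1 : S), (1 : S)), by simp, ?_⟩
                refine ⟨projTo (S := S) G W {G.src e, G.tgt e}
                  (projTo (S := S) G W I m₀),
                  Submodule.mem_map_of_mem (Submodule.mem_map_of_mem hm₀), ?_⟩
                funext v
                simp
              · push_neg at hxe
                have hEq : projTo (S := S) G W {G.src e, G.tgt e} g = 0 := by
                  funext v
                  by_cases hv : v ∈ ({G.src e, G.tgt e} : Set G.Vertex)
                  · have hvx : v ≠ x := by
                      rintro rfl
                      rw [Set.mem_insert_iff, Set.mem_singleton_iff] at hv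
                      rcases hv with h | h
                      · exact hxe.1 h
                      · exact hxe.2 h
                    simp [projTo_apply, hv, hgv v hvx]
                  · simp [projTo_apply, hv]
                rw [hEq]
                exact Submodule.zero_mem _
          have hmem : g ∈ (↑(projMod G W M I) : Set (∀ x, W x)) := by
            rw [hdet]
            exact hloc
          exact hmem
        · rw [LinearMap.mem_ker, projTo_eq_zero_iff]
          intro v hv
          exact hgv v (by simpa using hv.2)
    · have hcomp : (projTo (S := S) G W (I \ {x})).comp
          (projTo (S := S) G W I) = projTo (S := S) G W (I \ {x}) := by
        apply LinearMap.ext; intro m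
        funext v
        by_cases hv : v ∈ I \ {x}
        · simp [projTo_apply, hv, hv.1]
        · simp [projTo_apply, hv]
      show Submodule.map _ (Submodule.map _ M) = Submodule.map _ M
      rw [← Submodule.map_comp, hcomp]
  refine ⟨hpart1, ?_⟩
  intro n en hen
  have hsuppv : ∀ m ∈ M, ∀ v, m v ≠ 0 → ∃ j : Fin n, ((en j) : G.Vertex) = v := by
    intro m hm v hv
    exact ⟨en.symm ⟨v, m, hm, hv⟩, by simp⟩
  set Js : Fin (n + 1) → Set G.Vertex :=
    fun i => {v | ∃ j : Fin n, (i : ℕ) ≤ (j : ℕ) ∧ G.le v ((en j) : G.Vertex)}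
    with hJs
  have hJopen : ∀ i, IsOpenSub G (Js i) := by
    intro i a b hab hb
    obtain ⟨j, hj1, hj2⟩ := hb
    exact ⟨j, hj1, G.le_trans a b _ hab hj2⟩
  set N : Fin (n + 1) → Submodule S (∀ x, W x) :=
    fun i => M ⊓ LinearMap.ker (projTo (S := S) G W (Js i)) with hN
  have hmemN : ∀ (i) (m : ∀ x, W x),
      m ∈ N i ↔ m ∈ M ∧ ∀ v ∈ Js i, m v = 0 := by
    intro i m
    rw [hN]
    rw [Submodule.mem_inf, LinearMap.mem_ker, projTo_eq_zero_iff]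
  have hN0 : N 0 = ⊥ := by
    rw [eq_bot_iff]
    intro m hm
    rw [hmemN] at hm
    rw [Submodule.mem_bot]
    funext v
    show m v = 0
    by_cases hv : m v = 0
    · exact hv
    · obtain ⟨j, hj⟩ := hsuppv m hm.1 v hv
      exact absurd (hm.2 v ⟨j, by simp, by rw [hj]; exact G.le_refl v⟩) hv
  have hNlast : N (Fin.last n) = M := by
    have hempty : Js (Fin.last n) = ∅ := by
      ext v
      simp only [hJs, Set.mem_setOf_eq, Set.mem_empty_iff_false, iff_false]
      rintro ⟨j, hj, -⟩
      rw [Fin.val_last] at hj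
      exact absurd hj (Nat.not_le.mpr j.isLt)
    apply le_antisymm
    · rw [hN]; exact inf_le_left
    · intro m hm
      rw [hmemN]
      exact ⟨hm, by simp [hempty]⟩
  have hmono : Monotone N := by
    intro i j hij m hm
    rw [hmemN] at hm ⊢
    refine ⟨hm.1, fun v hv => hm.2 v ?_⟩
    obtain ⟨j', hj1, hj2⟩ := hv
    exact ⟨j', le_trans (show (i : ℕ) ≤ (j : ℕ) from hij) hj1, hj2⟩
  have hstab : ∀ i : Fin (n + 1), ∀ z : G.Vertex → S, z ∈ structSubalg G S ι →
      ∀ m ∈ N i, (fun x => algebraMap S Q (z x) • m x) ∈ N i := by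
    intro i z hz m hm
    rw [hmemN] at hm ⊢
    refine ⟨hZstab z hz m hm.1, fun v hv => ?_⟩
    show algebraMap S Q (z v) • m v = 0
    rw [hm.2 v hv, smul_zero]
  refine ⟨N, hN0, hNlast, hmono, hstab, ?_⟩
  intro i
  set x : G.Vertex := ((en i) : G.Vertex) with hx
  have hxmemJ : x ∈ Js i.castSucc := ⟨i, by simp, G.le_refl _⟩
  have hxmax : ∀ y ∈ Js i.castSucc, G.le x y → y = x := by
    intro y hy hxy
    obtain ⟨j, hj1, hj2⟩ := hy
    rw [Fin.coe_castSucc] at hj1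
    have hle : G.le ((en i) : G.Vertex) ((en j) : G.Vertex) :=
      G.le_trans _ _ _ (by rw [← hx]; exact hxy) hj2
    have heq : ((en i) : G.Vertex) = ((en j) : G.Vertex) := by
      by_contra hne
      have hlt := hen j i hle hne
      have h2 : (j : ℕ) < (i : ℕ) := hlt
      omega
    rw [← heq] at hj2
    exact G.le_antisymm y x (by rw [hx]; exact hj2) hxy
  have hkey : ∀ m ∈ M, (∀ w ∈ Js i.succ, m w = 0) →
      ∀ v ∈ Js i.castSucc, v ≠ x → m v = 0 := by
    intro m hm hvan v hv hvx
    by_contra h0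
    obtain ⟨j', hj'⟩ := hsuppv m hm v h0
    obtain ⟨j, hj1, hj2⟩ := hv
    rw [Fin.coe_castSucc] at hj1
    rw [← hj'] at hj2
    have hij' : (i : ℕ) ≤ (j' : ℕ) := by
      by_cases he : ((en j') : G.Vertex) = ((en j) : G.Vertex)
      · have hjj : j' = j := en.injective (Subtype.coe_injective he)
        omega
      · have hlt := hen j j' hj2 he
        have h2 : (j : ℕ) < (j' : ℕ) := hlt
        omega
    have hne : (i : ℕ) ≠ (j' : ℕ) := by
      intro he
      apply hvx
      have hji : j' = i := Fin.ext he.symm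
      rw [← hj', hji, hx]
    have hvJ : v ∈ Js i.succ :=
      ⟨j', by rw [Fin.val_succ]; omega, by rw [hj']; exact G.le_refl v⟩
    exact h0 (hvan v hvJ)
  have hxnotsucc : x ∉ Js i.succ := by
    rintro ⟨j, hj1, hj2⟩
    rw [Fin.val_succ] at hj1
    rw [hx] at hj2
    by_cases he : ((en i) : G.Vertex) = ((en j) : G.Vertex)
    · have hij : i = j := en.injective (Subtype.coe_injective he)
      have h3 : (i : ℕ) = (j : ℕ) := by rw [hij]
      omega
    · have hlt := hen j i hj2 he
      have h2 : (j : ℕ) < (i : ℕ) := hlt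
      omega
  have hJsubset : Js i.succ ⊆ Js i.castSucc \ {x} := by
    intro v hv
    refine ⟨?_, ?_⟩
    · obtain ⟨j, hj1, hj2⟩ := hv
      rw [Fin.val_succ] at hj1
      exact ⟨j, by rw [Fin.coe_castSucc]; omega, hj2⟩
    · intro hvx
      rw [Set.mem_singleton_iff] at hvx
      rw [hvx] at hv
      exact hxnotsucc hv
  have hcod : ∀ mm : ↥(N i.succ),
      ((projTo (S := S) G W {y | G.le y x}).comp (N i.succ).subtype) mm
        ∈ grKernel G W M x := by
    intro mm
    have hm := (hmemN _ _).1 mm.2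
    rw [grKernel, Submodule.mem_inf]
    constructor
    · exact Submodule.mem_map_of_mem hm.1
    · rw [mem_vertexOnly_iff]
      intro v hvx
      by_cases hvle : G.le v x
      · have hvJ : v ∈ Js i.castSucc := hJopen i.castSucc v x hvle hxmemJ
        have h0 : (mm : ∀ v, W v) v = 0 := hkey mm.1 hm.1 hm.2 v hvJ hvx
        simp [projTo_apply, Set.mem_setOf_eq, hvle, h0]
      · simp [projTo_apply, Set.mem_setOf_eq, hvle]
  set f : ↥(N i.succ) →ₗ[S] ↥(grKernel G W M x) :=
    LinearMap.codRestrict (grKernel G W M x)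
      ((projTo (S := S) G W {y | G.le y x}).comp (N i.succ).subtype) hcod
    with hf
  have hfapp : ∀ mm : ↥(N i.succ),
      ((f mm : ∀ v, W v))
        = projTo (S := S) G W {y | G.le y x} (mm : ∀ v, W v) := by
    intro mm
    rw [hf]
    rfl
  have hfker : LinearMap.ker f
      = Submodule.comap (N i.succ).subtype (N i.castSucc) := by
    ext mm
    rw [LinearMap.mem_ker, Submodule.mem_comap]
    constructor
    · intro h
      have h0 : projTo (S := S) G W {y | G.le y x} (mm : ∀ v, W v) = 0 := by
        rw [← hfapp mm, h]
        rfl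
      rw [projTo_eq_zero_iff] at h0
      have hm := (hmemN _ _).1 mm.2
      rw [hmemN]
      refine ⟨hm.1, fun v hv => ?_⟩
      by_cases hvx : v = x
      · rw [hvx]
        exact h0 x (G.le_refl x)
      · exact hkey mm.1 hm.1 hm.2 v hv hvx
    · intro h
      apply Subtype.ext
      show ((f mm : ∀ v, W v)) = ((0 : ↥(grKernel G W M x)) : ∀ v, W v)
      rw [hfapp]
      show projTo (S := S) G W {y | G.le y x} (mm : ∀ v, W v) = 0
      rw [projTo_eq_zero_iff]
      intro v hv
      have hvJ : v ∈ Js i.castSucc := hJopen i.castSucc v x hv hxmemJ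
      exact ((hmemN _ _).1 h).2 v hvJ
  have hfsurj : Function.Surjective f := by
    intro g
    obtain ⟨h1, -⟩ := hpart1 (Js i.castSucc) (hJopen _) x hxmemJ hxmax
    have hg : (g : ∀ v, W v) ∈ projMod G W M (Js i.castSucc)
        ⊓ LinearMap.ker (projTo (S := S) G W (Js i.castSucc \ {x})) := by
      rw [h1]; exact g.2
    rw [Submodule.mem_inf] at hg
    obtain ⟨hgp, hgker⟩ := hg
    rw [mem_projMod_iff] at hgp
    obtain ⟨m₁, hm₁, hm₁eq⟩ := hgp
    rw [LinearMap.mem_ker, projTo_eq_zero_iff] at hgker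
    have hm₁van : ∀ v ∈ Js i.succ, m₁ v = 0 := by
      intro v hv
      have hv' := hJsubset hv
      have h3 := hgker v hv'
      rw [← hm₁eq] at h3
      simpa [projTo_apply, hv'.1] using h3
    have hm₁N : m₁ ∈ N i.succ := (hmemN _ _).2 ⟨hm₁, hm₁van⟩
    refine ⟨⟨m₁, hm₁N⟩, ?_⟩
    apply Subtype.ext
    rw [hfapp]
    show projTo (S := S) G W {y | G.le y x} m₁ = (g : ∀ v, W v)
    funext v
    by_cases hvle : G.le v x
    · have hvJ : v ∈ Js i.castSucc := hJopen _ v x hvle hxmemJ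
      rw [← hm₁eq]
      simp [projTo_apply, Set.mem_setOf_eq, hvle, hvJ]
    · have hvx : v ≠ x := by rintro rfl; exact hvle (G.le_refl x)
      have hgk : (g : ∀ v, W v) ∈
          projMod G W M {y | G.le y x} ⊓ vertexOnly G W x := g.2
      have hgvo : (g : ∀ v, W v) ∈ vertexOnly (S := S) G W x :=
        (Submodule.mem_inf.1 hgk).2
      rw [mem_vertexOnly_iff] at hgvo
      simp [projTo_apply, Set.mem_setOf_eq, hvle, hgvo v hvx]
  have hle : Submodule.comap (N i.succ).subtype (N i.castSucc)
      ≤ LinearMap.ker f := le_of_eq hfker.symm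
  set φ₀ : (↥(N i.succ) ⧸ Submodule.comap (N i.succ).subtype (N i.castSucc))
      →ₗ[S] ↥(grKernel G W M x) :=
    Submodule.liftQ (Submodule.comap (N i.succ).subtype (N i.castSucc)) f hle
    with hφ₀
  have hφ₀mk : ∀ mm : ↥(N i.succ),
      φ₀ (Submodule.Quotient.mk mm) = f mm := by
    intro mm
    rw [hφ₀]
    exact Submodule.liftQ_apply _ f mm
  have hbij : Function.Bijective φ₀ := by
    constructor
    · rw [← LinearMap.ker_eq_bot, hφ₀]
      exact Submodule.ker_liftQ_eq_bot _ _ _ (le_of_eq hfker)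
    · intro g
      obtain ⟨mm, hmm⟩ := hfsurj g
      exact ⟨Submodule.Quotient.mk mm, by rw [hφ₀mk, hmm]⟩
  refine ⟨LinearEquiv.ofBijective φ₀ hbij, ?_⟩
  intro z hz m hm'
  have happ : ∀ mm : ↥(N i.succ),
      ((LinearEquiv.ofBijective φ₀ hbij (Submodule.Quotient.mk mm)
          : ↥(grKernel G W M x)) : ∀ v, W v)
        = projTo (S := S) G W {y | G.le y x} (mm : ∀ v, W v) := by
    intro mm
    rw [LinearEquiv.ofBijective_apply, hφ₀mk, hfapp]
  rw [happ, happ]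
  funext v
  by_cases hv : G.le v x
  · simp [projTo_apply, Set.mem_setOf_eq, hv]
  · simp [projTo_apply, Set.mem_setOf_eq, hv]
end

section
/- Let G be a GKM moment graph and P ∈ C^{ref} a sheaf such that (1) each stalk P^x is a projective (graded free) S-module and (2) for every edge E: y →α x the map ρ_{y,E} induces an isomorphism P^y/αP^y ≅ P^E. Then P is a projective object of the exact category C^{ref}. -/
open scoped TensorProduct

variable {k V : Type} [Field k] [AddCommGroup V] [Module k V]

/-- A vertex is incident to an edge. -/
def Incident {k V : Type} [Field k] [AddCommGroup V] [Module k V]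
    (G : MomentGraph k V) (x : G.Vertex) (e : G.Edge) : Prop :=
  G.src e = x ∨ G.tgt e = x

/-- `G` is a GKM-graph: it is quasi-finite and at every vertex the labels of
the incident edges are pairwise linearly independent. -/
def IsGKM {k V S : Type} [Field k] [AddCommGroup V] [Module k V]
    [CommRing S] [Algebra k S] (ι : V →ₗ[k] S) (G : MomentGraph k V) : Prop :=
  QuasiFinite ι G ∧
    ∀ (x : G.Vertex) (e e' : G.Edge), Incident G x e → Incident G x e' →
      e ≠ e' → ∀ c : k, G.label e' ≠ c • G.label e

/-!
Lifts `P → B` of `h : P → C` along the admissible epimorphism `g : B → C` are built one vertex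
at a time, going up the order through the finite support of `P`. Suppose a lift `l` is already
compatible over an open subgraph `I`. A global section `s` of `P` has a global lift `t` to `B`;
on `I` the difference `t - l ∘ s` is a section of `ker g = A`, which extends to a global section
of the flabby sheaf `A`. Correcting `t` by it gives a global lift of `s` that agrees with `l ∘ s`
on `I`. Its value at a new vertex `x` is therefore compatible with `l` along every edge ending
at `x`, where the edge maps `P^E → B^E` are induced by `l` because `P^E = P^y / α P^y`. These
conditions on the value at `x` depend only on `s x`, so projectivity of `P^x` lets one choose
the value linearly in `s x`.
-/

theorem LinearMap.exists_comp_eq_of_surjective_of_ker_le {R M N Y : Type*} [CommRing R]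
    [AddCommGroup M] [Module R M] [AddCommGroup N] [Module R N] [AddCommGroup Y] [Module R Y]
    (f : M →ₗ[R] N) (hf : Function.Surjective f) (q : M →ₗ[R] Y)
    (hfq : LinearMap.ker f ≤ LinearMap.ker q) :
    ∃ ψ : N →ₗ[R] Y, ψ ∘ₗ f = q :=
  ⟨(LinearMap.ker f).liftQ q hfq ∘ₗ (f.quotKerEquivOfSurjective hf).symm.toLinearMap,
    by ext m; simp⟩

theorem Module.Projective.exists_comp_eq_of_range_le {R M N Y : Type*} [CommRing R]
    [AddCommGroup M] [Module R M] [AddCommGroup N] [Module R N] [AddCommGroup Y] [Module R Y]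
    [Module.Projective R M] (Φ : N →ₗ[R] Y) (θ : M →ₗ[R] Y)
    (hθ : LinearMap.range θ ≤ LinearMap.range Φ) :
    ∃ l : M →ₗ[R] N, Φ ∘ₗ l = θ := by
  obtain ⟨l, hl⟩ := Module.projective_lifting_property Φ.rangeRestrict
    (θ.codRestrict _ fun m => hθ ⟨m, rfl⟩) Φ.surjective_rangeRestrict
  exact ⟨l, by ext m; exact congrArg Subtype.val (LinearMap.congr_fun hl m)⟩

theorem MomentGraph.exists_minimal (G : MomentGraph k V) {s : Set G.Vertex} (hs : s.Finite)
    (hne : s.Nonempty) : ∃ x ∈ s, ∀ z ∈ s, G.le z x → z = x := by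
  let : LE G.Vertex := ⟨G.le⟩
  have : IsTrans G.Vertex (· ≤ ·) := ⟨G.le_trans⟩
  obtain ⟨x, hxs, hmin⟩ := hs.exists_minimal hne
  exact ⟨x, hxs, fun z hz hzx => G.le_antisymm z x hzx (hmin hz hzx)⟩

theorem isOpenSub_univ (G : MomentGraph k V) : IsOpenSub G Set.univ :=
  fun _ _ _ _ => Set.mem_univ _

theorem isOpenSub_setOf_forall_le (G : MomentGraph k V) (s D : Set G.Vertex) :
    IsOpenSub G {y | ∀ z ∈ s, G.le z y → z ∈ D} :=
  fun _ _ h12 hy z hz hzle => hy z hz (G.le_trans _ _ _ hzle h12)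

section Lifting

variable {S : Type} [CommRing S] {G : MomentGraph k V} {σ : V → S} {A P B C : GSheaf G σ}

theorem GSheafHom.map_mem_sheafSec (φ : GSheafHom P B) {I : Set G.Vertex} {s : ∀ x, P.Mv x}
    (hs : s ∈ sheafSec P I) : (fun y => φ.fv y (s y)) ∈ sheafSec B I := by
  refine ⟨fun y hy => ?_, fun e hsI htI => ?_⟩
  · show φ.fv y (s y) = 0
    rw [hs.1 y hy, map_zero]
  · show B.ρs e (φ.fv _ _) = B.ρt e (φ.fv _ _)
    rw [← φ.comm_s, ← φ.comm_t, hs.2 e hsI htI]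

theorem SheafSES.exists_global_of_map_eq_zero {f : GSheafHom A B} {g : GSheafHom B C}
    (hses : SheafSES f g) (hA : IsFlabbySheaf A) {I : Set G.Vertex} (hI : IsOpenSub G I)
    {d : ∀ x, B.Mv x} (hd : d ∈ sheafSec B I) (hgd : ∀ y, g.fv y (d y) = 0) :
    ∃ a ∈ sheafSec A Set.univ, ∀ y ∈ I, f.fv y (a y) = d y := by
  obtain ⟨a, ha, hfa⟩ := (hses I hI).2.2.1 d hd (funext hgd)
  obtain ⟨a', ha', haa⟩ := hA I hI a ha
  exact ⟨a', ha', fun y hy => by rw [haa y hy]; exact congrFun hfa y⟩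

theorem ρs_map_eq_zero_of_ρs_eq_zero {e : G.Edge}
    (hker : ∀ m : P.Mv (G.src e), P.ρs e m = 0 → ∃ n, m = σ (G.label e) • n)
    (q : P.Mv (G.src e) →ₗ[S] B.Mv (G.src e)) {m : P.Mv (G.src e)} (hm : P.ρs e m = 0) :
    B.ρs e (q m) = 0 := by
  obtain ⟨n, rfl⟩ := hker m hm
  rw [map_smul, map_smul, B.killed]

theorem exists_edgeMap_comp_ρs {e : G.Edge} (hsurj : Function.Surjective (P.ρs e))
    (hker : ∀ m : P.Mv (G.src e), P.ρs e m = 0 → ∃ n, m = σ (G.label e) • n)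
    (q : P.Mv (G.src e) →ₗ[S] B.Mv (G.src e)) :
    ∃ ψ : P.Me e →ₗ[S] B.Me e, ∀ m, ψ (P.ρs e m) = B.ρs e (q m) := by
  obtain ⟨ψ, hψ⟩ := LinearMap.exists_comp_eq_of_surjective_of_ker_le (P.ρs e).hom hsurj
    ((B.ρs e).hom ∘ₗ q) fun m hm => ρs_map_eq_zero_of_ρs_eq_zero hker q hm
  exact ⟨ψ, LinearMap.congr_fun hψ⟩

def IsLiftOver (g : GSheafHom B C) (h : GSheafHom P C) (l : ∀ y, P.Mv y →ₗ[S] B.Mv y)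
    (I : Set G.Vertex) : Prop :=
  (∀ y ∈ I, ∀ m, g.fv y (l y m) = h.fv y m) ∧
    ∀ e, G.tgt e ∈ I → ∀ (m : P.Mv (G.tgt e)) (m' : P.Mv (G.src e)),
      P.ρs e m' = P.ρt e m → B.ρs e (l (G.src e) m') = B.ρt e (l (G.tgt e) m)

variable {g : GSheafHom B C} {h : GSheafHom P C} {l : ∀ y, P.Mv y →ₗ[S] B.Mv y}
  {I : Set G.Vertex}

theorem IsLiftOver.mono_of_forall_eq_zero (hl : IsLiftOver g h l I)
    (hker : ∀ e (m : P.Mv (G.src e)), P.ρs e m = 0 → ∃ n, m = σ (G.label e) • n)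
    {J : Set G.Vertex} (hJ : ∀ y ∈ J, y ∉ I → ∀ m : P.Mv y, m = 0) :
    IsLiftOver g h l J := by
  refine ⟨fun y hy m => ?_, fun e he m m' hm => ?_⟩
  · by_cases hyI : y ∈ I
    · exact hl.1 y hyI m
    · rw [hJ y hy hyI m, map_zero, map_zero, map_zero]
  · by_cases htI : G.tgt e ∈ I
    · exact hl.2 e htI m m' hm
    · rw [hJ _ he htI m, map_zero, map_zero] at *
      exact ρs_map_eq_zero_of_ρs_eq_zero (hker e) _ hm

theorem IsLiftOver.exists_lift_section {f : GSheafHom A B} (hl : IsLiftOver g h l I)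
    (hI : IsOpenSub G I) (hses : SheafSES f g) (hA : IsFlabbySheaf A) {s : ∀ x, P.Mv x}
    (hs : s ∈ sheafSec P Set.univ) :
    ∃ t ∈ sheafSec B Set.univ, (∀ y, g.fv y (t y) = h.fv y (s y)) ∧ ∀ y ∈ I, t y = l y (s y) := by
  classical
  obtain ⟨t, ht, hgt⟩ := (hses Set.univ (isOpenSub_univ G)).2.2.2 _ (h.map_mem_sheafSec hs)
  replace hgt : ∀ y, g.fv y (t y) = h.fv y (s y) := congrFun hgt
  set d : ∀ y, B.Mv y := fun y => if y ∈ I then t y - l y (s y) else 0 with hd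
  have hdI : d ∈ sheafSec B I := by
    refine ⟨fun y hy => if_neg hy, fun e hsI htI => ?_⟩
    simp only [hd, if_pos hsI, if_pos htI, map_sub]
    rw [ht.2 e trivial trivial, hl.2 e htI _ _ (hs.2 e trivial trivial)]
  have hgd : ∀ y, g.fv y (d y) = 0 := fun y => by
    by_cases hy : y ∈ I
    · simp only [hd, if_pos hy, map_sub, hgt, hl.1 y hy, sub_self]
    · simp only [hd, if_neg hy, map_zero]
  obtain ⟨a, ha, hfa⟩ := hses.exists_global_of_map_eq_zero hA hI hdI hgd
  refine ⟨t - fun y => f.fv y (a y), Submodule.sub_mem _ ht (f.map_mem_sheafSec ha),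
    fun y => ?_, fun y hy => ?_⟩
  · have hgfa : g.fv y (f.fv y (a y)) = 0 :=
      congrFun ((hses Set.univ (isOpenSub_univ G)).2.1 a ha) y
    rw [Pi.sub_apply, map_sub, hgt, hgfa, sub_zero]
  · simp only [Pi.sub_apply, hfa y hy, hd, if_pos hy, sub_sub_cancel]

theorem IsLiftOver.exists_update {f : GSheafHom A B} (hl : IsLiftOver g h l I)
    (hI : IsOpenSub G I) (hses : SheafSES f g) (hA : IsFlabbySheaf A)
    (hgen : ∀ x (m : P.Mv x), ∃ s ∈ sheafSec P Set.univ, s x = m)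
    (hsurj : ∀ e, Function.Surjective (P.ρs e))
    (hker : ∀ e (m : P.Mv (G.src e)), P.ρs e m = 0 → ∃ n, m = σ (G.label e) • n)
    [DecidableEq G.Vertex] {x : G.Vertex} [Module.Projective S (P.Mv x)] (hxI : x ∉ I)
    (hsrc : ∀ e, G.tgt e = x → G.src e ∈ I) :
    ∃ lx, IsLiftOver g h (Function.update l x lx) (insert x I) := by
  choose ψ hψ using fun e => exists_edgeMap_comp_ρs (B := B) (hsurj e) (hker e) (l (G.src e))
  -- `lx` is the wanted extension iff `Φ ∘ₗ lx = θ`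
  let Φ : B.Mv x →ₗ[S] C.Mv x × ∀ e, B.Me e := (g.fv x).hom.prod <| LinearMap.pi fun e =>
    (B.ρt e).hom ∘ₗ LinearMap.proj (G.tgt e) ∘ₗ LinearMap.single S (fun y => B.Mv y) x
  let θ : P.Mv x →ₗ[S] C.Mv x × ∀ e, B.Me e := (h.fv x).hom.prod <| LinearMap.pi fun e =>
    ψ e ∘ₗ (P.ρt e).hom ∘ₗ LinearMap.proj (G.tgt e) ∘ₗ LinearMap.single S (fun y => P.Mv y) x
  have hΦ : ∀ b e, (Φ b).2 e = B.ρt e ((Pi.single x b : ∀ y, B.Mv y) (G.tgt e)) := fun _ _ => rfl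
  have hθ : ∀ m e, (θ m).2 e = ψ e (P.ρt e ((Pi.single x m : ∀ y, P.Mv y) (G.tgt e))) :=
    fun _ _ => rfl
  have hθΦ : LinearMap.range θ ≤ LinearMap.range Φ := by
    rintro _ ⟨m, rfl⟩
    obtain ⟨s, hs, rfl⟩ := hgen x m
    obtain ⟨t, ht, hgt, htl⟩ := hl.exists_lift_section hI hses hA hs
    refine ⟨t x, Prod.ext (hgt x) (funext fun e => ?_)⟩
    rw [hΦ, hθ]
    by_cases he : G.tgt e = x
    · subst he
      rw [Pi.single_eq_same, Pi.single_eq_same, ← ht.2 e trivial trivial,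
        htl _ (hsrc e rfl), ← hψ, hs.2 e trivial trivial]
    · rw [Pi.single_eq_of_ne he, Pi.single_eq_of_ne he, map_zero, map_zero, map_zero]
  obtain ⟨lx, hlx⟩ := Module.Projective.exists_comp_eq_of_range_le Φ θ hθΦ
  have hΦθ : ∀ m, Φ (lx m) = θ m := LinearMap.congr_fun hlx
  refine ⟨lx, fun y hy m => ?_, fun e he m m' hm => ?_⟩
  · rcases hy with rfl | hy
    · rw [Function.update_self]
      exact congrArg Prod.fst (hΦθ m)
    · rw [Function.update_of_ne (ne_of_mem_of_not_mem hy hxI)]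
      exact hl.1 y hy m
  · rcases he with he | he
    · subst he
      have hρt := congrFun (congrArg Prod.snd (hΦθ m)) e
      rw [hΦ, hθ, Pi.single_eq_same, Pi.single_eq_same] at hρt
      rw [Function.update_of_ne (G.src_ne_tgt e), Function.update_self, hρt, ← hm, hψ]
    · have hsI : G.src e ∈ I := hI _ _ (G.src_le_tgt e) he
      rw [Function.update_of_ne (ne_of_mem_of_not_mem hsI hxI),
        Function.update_of_ne (ne_of_mem_of_not_mem he hxI)]
      exact hl.2 e he m m' hm

theorem IsLiftOver.exists_gSheafHom (hl : IsLiftOver g h l Set.univ)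
    (hsurj : ∀ e, Function.Surjective (P.ρs e))
    (hker : ∀ e (m : P.Mv (G.src e)), P.ρs e m = 0 → ∃ n, m = σ (G.label e) • n) :
    ∃ l' : GSheafHom P B,
      (∀ x m, g.fv x (l'.fv x m) = h.fv x m) ∧ ∀ e u, g.fe e (l'.fe e u) = h.fe e u := by
  choose ψ hψ using fun e => exists_edgeMap_comp_ρs (B := B) (hsurj e) (hker e) (l (G.src e))
  have hψt : ∀ e m, ψ e (P.ρt e m) = B.ρt e (l (G.tgt e) m) := fun e m => by
    obtain ⟨m', hm'⟩ := hsurj e (P.ρt e m)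
    rw [← hm', hψ, hl.2 e trivial m m' hm']
  refine ⟨⟨fun y => ModuleCat.ofHom (l y), fun e => ModuleCat.ofHom (ψ e), hψ, hψt⟩,
    fun y => hl.1 y trivial, fun e u => ?_⟩
  obtain ⟨m, rfl⟩ := hsurj e u
  show g.fe e (ψ e (P.ρs e m)) = h.fe e (P.ρs e m)
  rw [hψ, g.comm_s, hl.1 _ trivial m, h.comm_s]

theorem exists_isLiftOver_univ [DecidableEq G.Vertex] (hfin : {x | ∃ m : P.Mv x, m ≠ 0}.Finite)
    (hker : ∀ e (m : P.Mv (G.src e)), P.ρs e m = 0 → ∃ n, m = σ (G.label e) • n)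
    (hext : ∀ l I, IsLiftOver g h l I → IsOpenSub G I → ∀ x ∉ I,
      (∀ e, G.tgt e = x → G.src e ∈ I) →
      ∃ lx, IsLiftOver g h (Function.update l x lx) (insert x I)) :
    ∃ l, IsLiftOver g h l Set.univ := by
  set supp := {x | ∃ m : P.Mv x, m ≠ 0}
  have hzero : ∀ y ∉ supp, ∀ m : P.Mv y, m = 0 := fun y hy m => by
    by_contra hm
    exact hy ⟨m, hm⟩
  -- Vertices outside the support impose no condition, so lifts are carried over the open set
  -- `hull D` and not just over `D`.
  let hull (D : Set G.Vertex) : Set G.Vertex := {y | ∀ z ∈ supp, G.le z y → z ∈ D}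
  suffices ∃ l, IsLiftOver g h l (hull supp) by
    obtain ⟨l, hl⟩ := this
    exact ⟨l, hl.mono_of_forall_eq_zero hker fun y _ hy => absurd (fun z hz _ => hz) hy⟩
  refine (hfin.induction_to (C := fun D => (∀ y ∈ supp, ∀ z ∈ D, G.le y z → y ∈ D) ∧
    ∃ l, IsLiftOver g h l (hull D)) ∅ (Set.empty_subset _) ⟨by simp, ?_⟩ ?_).2
  · refine ⟨0, IsLiftOver.mono_of_forall_eq_zero (I := ∅) ⟨fun _ h => h.elim, fun _ h => h.elim⟩
      hker fun y hy _ => hzero y fun hys => hy y hys (G.le_refl y)⟩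
  rintro T hT ⟨hTlow, l, hl⟩
  obtain ⟨x, ⟨hxs, hxT⟩, hxmin⟩ := G.exists_minimal hfin.sdiff (Set.nonempty_of_ssubset hT)
  have hsrc : ∀ e, G.tgt e = x → G.src e ∈ hull T := by
    rintro e rfl z hz hzs
    by_contra hzT
    obtain rfl := hxmin z ⟨hz, hzT⟩ (G.le_trans _ _ _ hzs (G.src_le_tgt e))
    exact G.src_ne_tgt e (G.le_antisymm _ _ (G.src_le_tgt e) hzs)
  obtain ⟨lx, hlx⟩ := hext l _ hl (isOpenSub_setOf_forall_le G supp T) x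
    (fun hx => hxT (hx x hxs (G.le_refl x))) hsrc
  have hlow : ∀ y ∈ supp, ∀ z ∈ insert x T, G.le y z → y ∈ insert x T := by
    rintro y hy z (rfl | hz) hyz
    · by_cases hyT : y ∈ T
      · exact Or.inr hyT
      · exact Or.inl (hxmin y ⟨hy, hyT⟩ hyz)
    · exact Or.inr (hTlow y hy z hz hyz)
  refine ⟨x, ⟨hxs, hxT⟩, hlow, Function.update l x lx,
    hlx.mono_of_forall_eq_zero hker fun y hy hyx => hzero y fun hys => ?_⟩
  rcases hy y hys (G.le_refl y) with rfl | hyT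
  · exact hyx (Set.mem_insert _ _)
  · exact hyx (Or.inr fun z hz hzy => hTlow z hz y hyT hzy)

end Lifting

theorem local_criterion_projective_general
    {k V S : Type} [Field k] [AddCommGroup V] [Module k V]
    [CommRing S] [Algebra k S] (ι : V →ₗ[k] S)
    (G : MomentGraph k V)
    (P : GSheaf G (fun v => ι v)) (hP : IsCref P)
    (hfree : ∀ x, Module.Free S (P.Mv x))
    (hedge : ∀ e : G.Edge, Function.Surjective (P.ρs e) ∧
      ∀ m : P.Mv (G.src e),
        P.ρs e m = 0 ↔ ∃ n : P.Mv (G.src e), m = ι (G.label e) • n) :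
    IsProjCref P := by
  classical
  rintro B C - - g ⟨A, hA, f, hses⟩ h
  have hsurj := fun e => (hedge e).1
  have hker := fun e m => ((hedge e).2 m).1
  obtain ⟨l, hl⟩ := exists_isLiftOver_univ hP.1.1 hker fun l I hl hI x hxI hsrc =>
    have := hfree x
    hl.exists_update hI hses hA.2.2.1 hP.2.1.1 hsurj hker hxI hsrc
  exact hl.exists_gSheafHom hsurj hker

/-- Let `G` be a GKM moment graph and `P ∈ C^{ref}` a sheaf such
that (1) each stalk `P^x` is a projective (free) `S`-module and (2) for every
edge `E : y →α x` the map `ρ_{y,E}` induces an isomorphism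
`P^y/αP^y ≅ P^E`.  Then `P` is a projective object of the exact category
`C^{ref}`. -/
theorem local_criterion_projective
    {k V S : Type} [Field k] [AddCommGroup V] [Module k V]
    [CommRing S] [IsDomain S] [Algebra k S] (ι : V →ₗ[k] S)
    (hS : IsSymmAlg k V S ι)
    (G : MomentGraph k V) (hGKM : IsGKM ι G)
    (P : GSheaf G (fun v => ι v)) (hP : IsCref P)
    (hfree : ∀ x, Module.Free S (P.Mv x))
    (hedge : ∀ e : G.Edge, Function.Surjective (P.ρs e) ∧
      ∀ m : P.Mv (G.src e),
        P.ρs e m = 0 ↔ ∃ n : P.Mv (G.src e), m = ι (G.label e) • n) :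
    IsProjCref P :=
  local_criterion_projective_general ι G P hP hfree hedge
end
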